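/- arXiv:2508.21383 — 6 statements merged into one kernel-verified Lean document; each statement's English description precedes it below -/
import Mathlib

section
/- Let H be a BF-monoid with accepted elasticity, and let a, b ∈ H with ρ(L(a)) = ρ(L(b)) = ρ(H). Then ρ(L(ab)) = ρ(H), max L(ab) = max L(a) + max L(b), and min L(ab) = min L(a) + min L(b). -/
def IsAtomM {H : Type*} [CommMonoid H] (u : H) : Prop :=
  ¬ IsUnit u ∧ ∀ b c : H, u = b * c → IsUnit b ∨ IsUnit c

def LSetM {H : Type*} [CommMonoid H] (a : H) : Set ℕ :=
  {k | ∃ l : Multiset H, l.card = k ∧ (∀ u ∈ l, IsAtomM u) ∧ l.prod = a}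

noncomputable def rhoSet (L : Set ℕ) : ℚ := ((sSup L : ℕ) : ℚ) / ((sInf L : ℕ) : ℚ)

def IsIntervalSet (L : Set ℕ) : Prop := L.Nonempty ∧ L = Set.Icc (sInf L) (sSup L)

def IsBFMonoid (H : Type*) [CommMonoid H] : Prop :=
  ∀ a : H, ¬ IsUnit a → (LSetM a).Nonempty ∧ (LSetM a).Finite

lemma lset_add {H : Type*} [CommMonoid H] {a b : H} {k j : ℕ}
    (hk : k ∈ LSetM a) (hj : j ∈ LSetM b) : k + j ∈ LSetM (a * b) := by
  obtain ⟨l, hl, hla, hlp⟩ := hk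
  obtain ⟨m, hm, hma, hmp⟩ := hj
  refine ⟨l + m, by simp [hl, hm], fun u hu => ?_, by simp [hlp, hmp]⟩
  rcases Multiset.mem_add.1 hu with h | h
  exacts [hla u h, hma u h]

lemma zero_notMem_lset {H : Type*} [CommMonoid H] {a : H} (ha : ¬ IsUnit a) :
    0 ∉ LSetM a := by
  rintro ⟨l, hl, -, hlp⟩
  rw [Multiset.card_eq_zero] at hl
  subst hl
  simp only [Multiset.prod_zero] at hlp
  exact ha (hlp ▸ isUnit_one)

theorem stmt0 {H : Type*} [CancelCommMonoid H] (hBF : IsBFMonoid H) (ρH : ℚ)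
    (hub : ∀ x : H, ¬ IsUnit x → rhoSet (LSetM x) ≤ ρH)
    (hacc : ∃ x : H, ¬ IsUnit x ∧ rhoSet (LSetM x) = ρH)
    (a b : H) (ha : ¬ IsUnit a) (hb : ¬ IsUnit b)
    (hra : rhoSet (LSetM a) = ρH) (hrb : rhoSet (LSetM b) = ρH) :
    rhoSet (LSetM (a * b)) = ρH ∧
    sSup (LSetM (a * b)) = sSup (LSetM a) + sSup (LSetM b) ∧
    sInf (LSetM (a * b)) = sInf (LSetM a) + sInf (LSetM b) := by
  have hab : ¬ IsUnit (a * b) := fun h => ha (isUnit_of_mul_isUnit_left h)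
  obtain ⟨hna, hfa⟩ := hBF a ha
  obtain ⟨hnb, hfb⟩ := hBF b hb
  obtain ⟨hnab, hfab⟩ := hBF _ hab
  set Ma := sSup (LSetM a) with hMa_def
  set ma := sInf (LSetM a) with hma_def
  set Mb := sSup (LSetM b) with hMb_def
  set mb := sInf (LSetM b) with hmb_def
  set Mab := sSup (LSetM (a * b)) with hMab_def
  set mab := sInf (LSetM (a * b)) with hmab_def
  have hMa : Ma ∈ LSetM a := Nat.sSup_mem hna hfa.bddAbove
  have hma : ma ∈ LSetM a := Nat.sInf_mem hna
  have hMb : Mb ∈ LSetM b := Nat.sSup_mem hnb hfb.bddAbove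
  have hmb : mb ∈ LSetM b := Nat.sInf_mem hnb
  have hMab_ge : Ma + Mb ≤ Mab := le_csSup hfab.bddAbove (lset_add hMa hMb)
  have hmab_le : mab ≤ ma + mb := Nat.sInf_le (lset_add hma hmb)
  have hma0 : 0 < ma := Nat.pos_of_ne_zero fun h => zero_notMem_lset ha (h ▸ hma)
  have hmb0 : 0 < mb := Nat.pos_of_ne_zero fun h => zero_notMem_lset hb (h ▸ hmb)
  have hmab0 : 0 < mab :=
    Nat.pos_of_ne_zero fun h => zero_notMem_lset hab (h ▸ Nat.sInf_mem hnab)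
  have hmaq : (0:ℚ) < (ma:ℚ) := by exact_mod_cast hma0
  have hmbq : (0:ℚ) < (mb:ℚ) := by exact_mod_cast hmb0
  have hmabq : (0:ℚ) < (mab:ℚ) := by exact_mod_cast hmab0
  have hMa_eq : (Ma:ℚ) = ρH * ma := by
    have := hra
    rw [rhoSet, div_eq_iff hmaq.ne'] at this
    exact this
  have hMb_eq : (Mb:ℚ) = ρH * mb := by
    have := hrb
    rw [rhoSet, div_eq_iff hmbq.ne'] at this
    exact this
  have hMab_le : (Mab:ℚ) ≤ ρH * mab := by
    have := hub (a * b) hab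
    rw [rhoSet, div_le_iff₀ hmabq] at this
    exact this
  have hρ0 : 0 < ρH := by
    have hMa0 : (0:ℚ) < (Ma:ℚ) := by
      have : 0 < Ma := Nat.pos_of_ne_zero fun h => zero_notMem_lset ha (h ▸ hMa)
      exact_mod_cast this
    have hd := div_pos hMa0 hmaq
    rwa [show (Ma:ℚ) / (ma:ℚ) = rhoSet (LSetM a) from rfl, hra] at hd
  have h1 : ρH * ((ma:ℚ) + (mb:ℚ)) ≤ (Mab:ℚ) := by
    rw [mul_add, ← hMa_eq, ← hMb_eq]
    exact_mod_cast hMab_ge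
  have h2 : ρH * (mab:ℚ) ≤ ρH * ((ma:ℚ) + (mb:ℚ)) :=
    mul_le_mul_of_nonneg_left (by exact_mod_cast hmab_le) hρ0.le
  have heq : (Mab:ℚ) = ρH * mab := le_antisymm hMab_le (h2.trans h1)
  have heq2 : ρH * (mab:ℚ) = ρH * ((ma:ℚ) + (mb:ℚ)) :=
    le_antisymm h2 (h1.trans hMab_le)
  have hminq : (mab:ℚ) = (ma:ℚ) + (mb:ℚ) := mul_left_cancel₀ hρ0.ne' heq2
  refine ⟨?_, ?_, ?_⟩
  · show (Mab:ℚ) / (mab:ℚ) = ρH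
    rw [heq, mul_div_assoc, div_self hmabq.ne', mul_one]
  · have : (Mab:ℚ) = (Ma:ℚ) + (Mb:ℚ) := by
      rw [heq, heq2, mul_add, ← hMa_eq, ← hMb_eq]
    exact_mod_cast this
  · exact_mod_cast hminq
end

section
/- Let G be a finite abelian group with |G| ≥ 3. A zero-sum sequence A over G satisfies ρ(L(A)) = D(G)/2 if and only if there exist k, l ∈ ℕ and minimal zero-sum sequences U₁,…,U_k, V₁,…,V_l over G with |U₁| = … = |U_k| = D(G) and |V₁| = … = |V_l| = 2 such that A = U₁⋯U_k = V₁⋯V_l. -/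
def IsMinZS {G : Type*} [AddCommGroup G] (U : Multiset G) : Prop :=
  U ≠ 0 ∧ U.sum = 0 ∧ ∀ V ≤ U, V ≠ 0 → V.sum = 0 → V = U

noncomputable def DavC (G : Type*) [AddCommGroup G] : ℕ :=
  sSup {n | ∃ U : Multiset G, IsMinZS U ∧ U.card = n}

def LSet {G : Type*} [AddCommGroup G] (A : Multiset G) : Set ℕ :=
  {k | ∃ l : Multiset (Multiset G), l.card = k ∧ (∀ U ∈ l, IsMinZS U) ∧ l.sum = A}

/-!
In any factorization of `A` the atom `0` occurs exactly `v₀(A)` times, and every other atom has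
length between `2` and `D(G)`. Counting lengths, a factorization of length `m` satisfies
`2m ≤ |A| + v₀(A)` and `|A| + D(G) v₀(A) ≤ D(G) m + v₀(A)`. If `max L(A) / min L(A) = D(G)/2`,
the two bounds together give `(D(G) - 2) v₀(A) ≤ 0`, so `v₀(A) = 0` because `D(G) ≥ 3`, and then
both bounds are equalities: a shortest factorization consists of atoms of length `D(G)`, a longest
one of atoms of length `2`. Conversely, factorizations of these two kinds attain the two bounds,
so they are a shortest and a longest one.
-/

theorem Multiset.forall_eq_of_forall_le_of_sum_map_le {ι α : Type*} [AddCommMonoid α]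
    [PartialOrder α] [IsOrderedCancelAddMonoid α] {s : Multiset ι} {f g : ι → α}
    (hle : ∀ i ∈ s, f i ≤ g i) (hsum : (s.map g).sum ≤ (s.map f).sum) :
    ∀ i ∈ s, f i = g i := by
  by_contra! ⟨i, hi, hne⟩
  exact (Multiset.sum_lt_sum hle ⟨i, hi, lt_of_le_of_ne (hle i hi) hne⟩).not_ge hsum

theorem Multiset.exists_fin_iff_exists_card_eq {α : Type*} [AddCommMonoid α] {P : α → Prop}
    {k : ℕ} {a : α} :
    (∃ f : Fin k → α, (∀ i, P (f i)) ∧ a = ∑ i, f i) ↔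
      ∃ l : Multiset α, l.card = k ∧ (∀ x ∈ l, P x) ∧ l.sum = a := by
  constructor
  · rintro ⟨f, hP, rfl⟩
    exact ⟨Finset.univ.val.map f, by simp, by simpa using hP, rfl⟩
  · rintro ⟨⟨L⟩, hk, hP, rfl⟩
    rw [Multiset.quot_mk_to_coe'', Multiset.coe_card] at hk
    subst hk
    refine ⟨L.get, fun i => hP _ (by simp), ?_⟩
    rw [← List.sum_ofFn, List.ofFn_get]
    rfl

theorem Multiset.card_sum_eq_sum_map_card {α : Type*} (l : Multiset (Multiset α)) :
    l.sum.card = (l.map Multiset.card).sum :=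
  Multiset.card_join l

theorem Multiset.count_sum_eq_sum_map_count {α : Type*} [DecidableEq α]
    (l : Multiset (Multiset α)) (x : α) :
    l.sum.count x = (l.map (Multiset.count x)).sum := by
  simpa using Multiset.count_sum (m := l) (f := id) (a := x)

/-- `rhoSet L = 0` when `sInf L = 0`, by division by zero. -/
theorem rhoSet_eq_half_iff {L : Set ℕ} {d : ℕ} (hd : d ≠ 0) :
    rhoSet L = d / 2 ↔ sInf L ≠ 0 ∧ 2 * sSup L = d * sInf L := by
  rw [rhoSet]
  by_cases h0 : sInf L = 0
  · simp [h0, eq_comm (a := (0 : ℚ)), hd]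
  · rw [div_eq_div_iff (by exact_mod_cast h0) two_ne_zero]
    have hcast : ((2 * sSup L : ℕ) : ℚ) = d * sInf L ↔ 2 * sSup L = d * sInf L := by
      exact_mod_cast Iff.rfl
    rw [← hcast, Nat.cast_mul, Nat.cast_ofNat]
    exact ⟨fun h => ⟨h0, by linarith⟩, fun h => by linarith [h.2]⟩

section IsMinZS

variable {G : Type*} [AddCommGroup G] {U : Multiset G}

theorem IsMinZS.eq_singleton_zero_of_zero_mem (hU : IsMinZS U) (h0 : (0 : G) ∈ U) :
    U = {0} :=
  (hU.2.2 {0} (Multiset.singleton_le.2 h0) (by simp) (by simp)).symm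

theorem IsMinZS.zero_notMem_of_card_ne_one (hU : IsMinZS U) (h1 : U.card ≠ 1) :
    (0 : G) ∉ U :=
  fun h0 => h1 (by simp [hU.eq_singleton_zero_of_zero_mem h0])

theorem zero_mem_of_card_eq_one_of_sum_eq_zero (hU : U.card = 1) (hs : U.sum = 0) :
    (0 : G) ∈ U := by
  obtain ⟨x, rfl⟩ := Multiset.card_eq_one.1 hU
  simp_all

theorem IsMinZS.two_le_card (hU : IsMinZS U) (h0 : (0 : G) ∉ U) : 2 ≤ U.card := by
  have := Multiset.card_pos.2 hU.1
  by_contra! h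
  exact h0 (zero_mem_of_card_eq_one_of_sum_eq_zero (by omega) hU.2.1)

/-- A zero-sum subsequence leaves a zero-sum complement, and in a sequence of length at most
three one of the two is a single element, which must be `0`. -/
theorem isMinZS_of_card_le_three (hU : U ≠ 0) (hs : U.sum = 0) (h0 : (0 : G) ∉ U)
    (h3 : U.card ≤ 3) : IsMinZS U := by
  classical
  refine ⟨hU, hs, fun V hV hV0 hVs => ?_⟩
  by_contra hVU
  have hsplit : V + (U - V) = U := add_tsub_cancel_of_le hV
  have hWs : (U - V).sum = 0 := by
    rwa [← hsplit, Multiset.sum_add, hVs, zero_add] at hs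
  have hW0 : U - V ≠ 0 := fun h => hVU (by rwa [h, add_zero] at hsplit)
  have hcard := congrArg Multiset.card hsplit
  rw [Multiset.card_add] at hcard
  have := Multiset.card_pos.2 hV0
  have := Multiset.card_pos.2 hW0
  rcases (by omega : V.card = 1 ∨ (U - V).card = 1) with h | h
  · exact h0 (Multiset.mem_of_le hV (zero_mem_of_card_eq_one_of_sum_eq_zero h hVs))
  · exact h0 (Multiset.mem_of_le tsub_le_self (zero_mem_of_card_eq_one_of_sum_eq_zero h hWs))

theorem IsMinZS.two_le_card_add_count_zero [DecidableEq G] (hU : IsMinZS U) :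
    2 ≤ U.card + U.count 0 := by
  by_cases h0 : (0 : G) ∈ U
  · simp [hU.eq_singleton_zero_of_zero_mem h0]
  · rw [Multiset.count_eq_zero.2 h0]
    exact hU.two_le_card h0

theorem two_mul_le_of_mem_LSet [DecidableEq G] {A : Multiset G} {m : ℕ} (hm : m ∈ LSet A) :
    2 * m ≤ A.card + A.count 0 := by
  obtain ⟨l, rfl, hl, rfl⟩ := hm
  have h := Multiset.sum_map_le_sum_map (fun _ => 2) (fun U => U.card + U.count 0)
    fun U hU => (hl U hU).two_le_card_add_count_zero
  simpa [Multiset.sum_map_add, Multiset.card_sum_eq_sum_map_card,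
    Multiset.count_sum_eq_sum_map_count, mul_comm] using h

theorem bddAbove_LSet (A : Multiset G) : BddAbove (LSet A) := by
  classical
  exact ⟨A.card + A.count 0, fun m hm => by have := two_mul_le_of_mem_LSet hm; omega⟩

theorem isGreatest_LSet_of_card_eq_two_mul {A : Multiset G} {l : ℕ} (hz : (0 : G) ∉ A)
    (hl : l ∈ LSet A) (hAl : A.card = 2 * l) : IsGreatest (LSet A) l := by
  classical
  refine ⟨hl, fun m hm => ?_⟩
  have := two_mul_le_of_mem_LSet hm
  rw [Multiset.count_eq_zero.2 hz] at this
  omega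

theorem exists_fin_card_eq_two_of_mem_LSet {A : Multiset G} {l : ℕ} (hz : (0 : G) ∉ A)
    (hl : l ∈ LSet A) (hAl : A.card = 2 * l) :
    ∃ V : Fin l → Multiset G, (∀ j, IsMinZS (V j) ∧ (V j).card = 2) ∧ A = ∑ j, V j := by
  obtain ⟨lM, rfl, hatoms, rfl⟩ := hl
  have hcard : ∀ U ∈ lM, 2 = U.card := Multiset.forall_eq_of_forall_le_of_sum_map_le
    (fun U hU => (hatoms U hU).two_le_card fun h0 => hz (Multiset.mem_join.2 ⟨U, hU, h0⟩))
    (by simp [← Multiset.card_sum_eq_sum_map_card, hAl, mul_comm])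
  exact (Multiset.exists_fin_iff_exists_card_eq (P := fun W => IsMinZS W ∧ W.card = 2)).2
    ⟨lM, rfl, fun U hU => ⟨hatoms U hU, (hcard U hU).symm⟩, rfl⟩

end IsMinZS

section Davenport

variable {G : Type*} [AddCommGroup G] [Fintype G] {U : Multiset G}

/-- Two of the `|U| + 1 > |G|` prefix sums of `U` coincide; the segment between them sums
to `0`. -/
theorem exists_le_ne_zero_sum_eq_zero (U : Multiset G) (h : Fintype.card G ≤ U.card) :
    ∃ V ≤ U, V ≠ 0 ∧ V.sum = 0 := by
  obtain ⟨L⟩ := U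
  rw [Multiset.quot_mk_to_coe'', Multiset.coe_card] at h
  obtain ⟨i, j, hij, heq⟩ := Fintype.exists_ne_map_eq_of_card_lt
    (fun i : Fin (L.length + 1) => (L.take i).sum) (by simpa using Nat.lt_succ_of_le h)
  wlog hlt : (i : ℕ) < j generalizing i j
  · exact this j i hij.symm heq.symm (lt_of_le_of_ne (not_lt.1 hlt) (Fin.val_ne_of_ne hij.symm))
  have hprefix := List.take_append_drop i (L.take j)
  rw [List.take_take, min_eq_left hlt.le] at hprefix
  refine ⟨((L.take j).drop i : List G), ?_, ?_, ?_⟩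
  · exact Multiset.coe_le.2 ((List.drop_sublist _ _).trans (List.take_sublist _ _)).subperm
  · have := j.isLt
    simp only [ne_eq, Multiset.coe_eq_zero, ← List.length_eq_zero_iff, List.length_drop,
      List.length_take]
    omega
  · have := congrArg List.sum hprefix
    rw [List.sum_append] at this
    simpa [heq] using this

theorem IsMinZS.card_le_card (hU : IsMinZS U) : U.card ≤ Fintype.card G := by
  classical
  by_contra! h
  obtain ⟨x, hx⟩ := Multiset.exists_mem_of_ne_zero hU.1
  have hcard := Multiset.card_erase_add_one hx
  obtain ⟨V, hVle, hV0, hVs⟩ := exists_le_ne_zero_sum_eq_zero (U.erase x) (by omega)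
  have hVU := hU.2.2 V (hVle.trans (Multiset.erase_le x U)) hV0 hVs
  have := Multiset.card_le_card hVle
  rw [hVU] at this
  omega

theorem IsMinZS.card_le_davC (hU : IsMinZS U) : U.card ≤ DavC G :=
  le_csSup ⟨Fintype.card G, by rintro _ ⟨V, hV, rfl⟩; exact hV.card_le_card⟩ ⟨U, hU, rfl⟩

/-- With `a ≠ 0` and `b ∉ {0, -a}`, the sequence `a b (-(a + b))` is a minimal zero-sum
sequence. -/
theorem three_le_davC (hcard : 3 ≤ Fintype.card G) : 3 ≤ DavC G := by
  classical
  obtain ⟨a, ha⟩ := Fintype.exists_ne_of_one_lt_card (by omega) (0 : G)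
  obtain ⟨b, -, hb⟩ := Finset.exists_mem_notMem_of_card_lt_card
    (s := {0, -a}) (t := Finset.univ)
    (Finset.card_le_two.trans_lt (by rw [Finset.card_univ]; omega))
  simp only [Finset.mem_insert, Finset.mem_singleton, not_or] at hb
  have hab : -(a + b) ≠ 0 := by
    rw [neg_ne_zero]
    exact fun h => hb.2 (eq_neg_of_add_eq_zero_right h)
  have hU : IsMinZS ({a, b, -(a + b)} : Multiset G) := by
    refine isMinZS_of_card_le_three (by simp) (by simp [← add_assoc]) ?_ (by simp)
    simp only [Multiset.insert_eq_cons, Multiset.mem_cons, Multiset.mem_singleton, not_or]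
    exact ⟨ha.symm, Ne.symm hb.1, hab.symm⟩
  simpa using hU.card_le_davC

theorem IsMinZS.card_add_mul_count_zero_le [DecidableEq G] (hU : IsMinZS U) :
    U.card + DavC G * U.count 0 ≤ DavC G + U.count 0 := by
  by_cases h0 : (0 : G) ∈ U
  · simp [hU.eq_singleton_zero_of_zero_mem h0, add_comm]
  · simpa [Multiset.count_eq_zero.2 h0] using hU.card_le_davC

theorem card_add_mul_count_le_of_mem_LSet [DecidableEq G] {A : Multiset G} {m : ℕ}
    (hm : m ∈ LSet A) : A.card + DavC G * A.count 0 ≤ DavC G * m + A.count 0 := by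
  obtain ⟨l, rfl, hl, rfl⟩ := hm
  have h := Multiset.sum_map_le_sum_map (fun U => U.card + DavC G * U.count 0)
    (fun U => DavC G + U.count 0) fun U hU => (hl U hU).card_add_mul_count_zero_le
  simpa [Multiset.sum_map_add, Multiset.sum_map_mul_left, Multiset.card_sum_eq_sum_map_card,
    Multiset.count_sum_eq_sum_map_count, mul_comm] using h

theorem isLeast_LSet_of_card_eq_davC_mul {A : Multiset G} {k : ℕ} (hD : 0 < DavC G)
    (hz : (0 : G) ∉ A) (hk : k ∈ LSet A) (hAk : A.card = DavC G * k) : IsLeast (LSet A) k := by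
  classical
  refine ⟨hk, fun m hm => ?_⟩
  have := card_add_mul_count_le_of_mem_LSet hm
  rw [Multiset.count_eq_zero.2 hz, mul_zero, add_zero, add_zero, hAk] at this
  exact Nat.le_of_mul_le_mul_left this hD

theorem exists_fin_card_eq_davC_of_mem_LSet {A : Multiset G} {k : ℕ} (hk : k ∈ LSet A)
    (hAk : A.card = DavC G * k) :
    ∃ U : Fin k → Multiset G, (∀ i, IsMinZS (U i) ∧ (U i).card = DavC G) ∧ A = ∑ i, U i := by
  obtain ⟨lm, rfl, hatoms, rfl⟩ := hk
  have hcard : ∀ U ∈ lm, U.card = DavC G := Multiset.forall_eq_of_forall_le_of_sum_map_le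
    (fun U hU => (hatoms U hU).card_le_davC)
    (by simp [← Multiset.card_sum_eq_sum_map_card, hAk, mul_comm])
  exact (Multiset.exists_fin_iff_exists_card_eq (P := fun W => IsMinZS W ∧ W.card = DavC G)).2
    ⟨lm, rfl, fun U hU => ⟨hatoms U hU, hcard U hU⟩, rfl⟩

theorem card_eq_of_two_mul_sSup_LSet_eq {A : Multiset G} (hD : 3 ≤ DavC G)
    (hm0 : sInf (LSet A) ≠ 0) (h : 2 * sSup (LSet A) = DavC G * sInf (LSet A)) :
    (0 : G) ∉ A ∧ A.card = DavC G * sInf (LSet A) ∧ A.card = 2 * sSup (LSet A) := by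
  classical
  have hne := Nat.nonempty_of_pos_sInf (Nat.pos_of_ne_zero hm0)
  have hM := two_mul_le_of_mem_LSet (Nat.sSup_mem hne (bddAbove_LSet A))
  have hm := card_add_mul_count_le_of_mem_LSet (Nat.sInf_mem hne)
  have hz : A.count 0 = 0 := by nlinarith
  simp only [hz, mul_zero, add_zero] at hM hm
  exact ⟨Multiset.count_eq_zero.1 hz, by omega, by omega⟩

end Davenport

theorem stmt1_general {G : Type*} [AddCommGroup G] [Fintype G] (hcard : 3 ≤ Fintype.card G)
    (A : Multiset G) :
    rhoSet (LSet A) = (DavC G : ℚ) / 2 ↔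
      ∃ (k l : ℕ), 0 < k ∧ 0 < l ∧
        ∃ (U : Fin k → Multiset G) (V : Fin l → Multiset G),
          (∀ i, IsMinZS (U i) ∧ (U i).card = DavC G) ∧
          (∀ j, IsMinZS (V j) ∧ (V j).card = 2) ∧
          A = ∑ i, U i ∧ A = ∑ j, V j := by
  have hD := three_le_davC hcard
  rw [rhoSet_eq_half_iff (by omega)]
  constructor
  · rintro ⟨hm0, hMm⟩
    obtain ⟨hz, hAm, hAM⟩ := card_eq_of_two_mul_sSup_LSet_eq hD hm0 hMm
    have hne := Nat.nonempty_of_pos_sInf (Nat.pos_of_ne_zero hm0)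
    obtain ⟨U, hU, hAU⟩ := exists_fin_card_eq_davC_of_mem_LSet (Nat.sInf_mem hne) hAm
    obtain ⟨V, hV, hAV⟩ :=
      exists_fin_card_eq_two_of_mem_LSet hz (Nat.sSup_mem hne (bddAbove_LSet A)) hAM
    have hDm := Nat.mul_pos (by omega : 0 < DavC G) (Nat.pos_of_ne_zero hm0)
    exact ⟨_, _, Nat.pos_of_ne_zero hm0, by omega, U, V, hU, hV, hAU, hAV⟩
  · rintro ⟨k, l, hk, -, U, V, hU, hV, hAU, hAV⟩
    have hz : (0 : G) ∉ A := by
      rw [hAV, Multiset.mem_sum]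
      rintro ⟨j, -, hj⟩
      exact (hV j).1.zero_notMem_of_card_ne_one (by simp [(hV j).2]) hj
    have hAk : A.card = DavC G * k := by simp [hAU, Multiset.card_sum, hU, mul_comm]
    have hAl : A.card = 2 * l := by simp [hAV, Multiset.card_sum, hV, mul_comm]
    have hk_mem : k ∈ LSet A :=
      Multiset.exists_fin_iff_exists_card_eq.1 ⟨U, fun i => (hU i).1, hAU⟩
    have hl_mem : l ∈ LSet A :=
      Multiset.exists_fin_iff_exists_card_eq.1 ⟨V, fun j => (hV j).1, hAV⟩
    rw [(isLeast_LSet_of_card_eq_davC_mul (by omega) hz hk_mem hAk).csInf_eq,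
      (isGreatest_LSet_of_card_eq_two_mul hz hl_mem hAl).csSup_eq]
    exact ⟨hk.ne', by omega⟩

theorem stmt1 {G : Type*} [AddCommGroup G] [Fintype G] (hcard : 3 ≤ Fintype.card G)
    (A : Multiset G) (hA : A.sum = 0) :
    rhoSet (LSet A) = (DavC G : ℚ) / 2 ↔
      ∃ (k l : ℕ), 0 < k ∧ 0 < l ∧
        ∃ (U : Fin k → Multiset G) (V : Fin l → Multiset G),
          (∀ i, IsMinZS (U i) ∧ (U i).card = DavC G) ∧
          (∀ j, IsMinZS (V j) ∧ (V j).card = 2) ∧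
          A = ∑ i, U i ∧ A = ∑ j, V j :=
  stmt1_general hcard A
end

section
/- Let H be a BF-monoid with accepted elasticity and let a ∈ H with ρ(L(a)) = ρ(H) such that min L(a)+1 ∈ L(a) and max L(a)−1 ∈ L(a). Then there exists N ∈ ℕ such that L(aⁿ) is a discrete interval for all n ≥ N. -/
/-! Write `m = min L(a)` and `M = max L(a)`. Since `m, m + 1, M - 1, M ∈ L(a)`, the sums of `n`
elements of `{m, m + 1, M - 1, M}` already fill the whole interval `[n m, n M]` once
`n ≥ M - m`, so `[n m, n M] ⊆ L(aⁿ)`. Conversely, `min L(aⁿ) ≤ n m` and `max L(aⁿ) ≥ n M`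
together with `ρ(L(aⁿ)) ≤ ρ(H) = M / m` force `L(aⁿ) ⊆ [n m, n M]`. -/

open Set

lemma exists_eq_add_mul_pred_add_mul {s n t : ℕ} (hs : 1 ≤ s) (hn : s ≤ n) (ht : t ≤ n * s) :
    ∃ b c d e, b + c + d + e = n ∧ c + d * (s - 1) + e * s = t := by
  set q := t / s
  set r := t % s
  have hqr : s * q + r = t := Nat.div_add_mod t s
  have hrs : r < s := Nat.mod_lt t hs
  have hq : q ≤ n := Nat.le_of_mul_le_mul_right (by linarith) hs
  by_cases hqr_le : q + r ≤ n
  · exact ⟨n - q - r, r, 0, q, by omega, by rw [← hqr]; ring⟩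
  -- otherwise `r > 0`, and `t = (q + 1) s - (s - r)` uses `q + 1` terms
  have hq_lt : q < n := Nat.lt_of_mul_lt_mul_right (a := s) (by nlinarith)
  refine ⟨n - (q + 1), 0, s - r, q + 1 - (s - r), by omega, ?_⟩
  zify [hrs.le, hs, show s - r ≤ q + 1 by omega]
  have hqr' : (s : ℤ) * q + r = t := by exact_mod_cast hqr
  linear_combination hqr'

section Lengths

variable {H : Type*} [CommMonoid H]

lemma zero_mem_LSetM_one : (0 : ℕ) ∈ LSetM (1 : H) :=
  ⟨0, rfl, by simp, rfl⟩

lemma add_mem_LSetM_mul {x y : H} {k l : ℕ} (hk : k ∈ LSetM x) (hl : l ∈ LSetM y) :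
    k + l ∈ LSetM (x * y) := by
  obtain ⟨u, rfl, hu, rfl⟩ := hk
  obtain ⟨v, rfl, hv, rfl⟩ := hl
  refine ⟨u + v, Multiset.card_add u v, fun w hw => ?_, Multiset.prod_add u v⟩
  rcases Multiset.mem_add.1 hw with h | h
  exacts [hu w h, hv w h]

lemma mul_mem_LSetM_pow {a : H} {k : ℕ} (hk : k ∈ LSetM a) (n : ℕ) :
    n * k ∈ LSetM (a ^ n) := by
  induction n with
  | zero => simpa using zero_mem_LSetM_one
  | succ n ih => simpa [pow_succ, Nat.succ_mul] using add_mem_LSetM_mul ih hk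

lemma isUnit_of_zero_mem_LSetM {x : H} (h : (0 : ℕ) ∈ LSetM x) : IsUnit x := by
  obtain ⟨l, hl, -, rfl⟩ := h
  rw [Multiset.card_eq_zero.1 hl, Multiset.prod_zero]
  exact isUnit_one

lemma not_isUnit_of_mem_LSetM {x : H} {k : ℕ} (hk : k ∈ LSetM x) (hpos : 0 < k) :
    ¬ IsUnit x := by
  obtain ⟨l, rfl, hl, rfl⟩ := hk
  obtain ⟨u, hu⟩ := Multiset.card_pos_iff_exists_mem.1 hpos
  exact fun h => (hl u hu).1 (isUnit_of_dvd_unit (Multiset.dvd_prod hu) h)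

lemma Icc_subset_LSetM_pow {a : H} {m M n : ℕ} (hmM : m < M)
    (hn : M - m ≤ n) (hm : m ∈ LSetM a) (hm1 : m + 1 ∈ LSetM a) (hM1 : M - 1 ∈ LSetM a)
    (hM : M ∈ LSetM a) : Icc (n * m) (n * M) ⊆ LSetM (a ^ n) := by
  rintro t ⟨ht₁, ht₂⟩
  have hnM : n * M = n * m + n * (M - m) := by rw [← Nat.mul_add]; congr 1; omega
  obtain ⟨b, c, d, e, hn_eq, ht⟩ :=
    exists_eq_add_mul_pred_add_mul (t := t - n * m) (by omega) hn (by omega)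
  have hmem := add_mem_LSetM_mul (add_mem_LSetM_mul (add_mem_LSetM_mul
    (mul_mem_LSetM_pow hm b) (mul_mem_LSetM_pow hm1 c)) (mul_mem_LSetM_pow hM1 d))
    (mul_mem_LSetM_pow hM e)
  rw [← pow_add, ← pow_add, ← pow_add, hn_eq] at hmem
  convert hmem using 1
  subst hn_eq
  zify [hmM.le, show 1 ≤ M by omega, show 1 ≤ M - m by omega, ht₁] at ht ⊢
  linear_combination -ht

end Lengths

lemma eq_Icc_of_Icc_subset_of_rhoSet_le {L : Set ℕ} {p q : ℕ} (hL : BddAbove L) (h0 : 0 ∉ L)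
    (hpq : p ≤ q) (hsub : Icc p q ⊆ L) (hρ : rhoSet L ≤ q / p) : L = Icc p q := by
  have hinf : sInf L ≤ p := Nat.sInf_le (hsub ⟨le_rfl, hpq⟩)
  have hsup : q ≤ sSup L := le_csSup hL (hsub ⟨hpq, le_rfl⟩)
  have hinf_pos : 0 < sInf L :=
    Nat.pos_of_ne_zero fun h => h0 (h ▸ Nat.sInf_mem ⟨p, hsub ⟨le_rfl, hpq⟩⟩)
  have hp : 0 < p := hinf_pos.trans_le hinf
  have hcross : sSup L * p ≤ q * sInf L := by
    rw [rhoSet, div_le_div_iff₀ (by exact_mod_cast hinf_pos) (by exact_mod_cast hp)] at hρ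
    exact_mod_cast hρ
  -- `q · sInf L ≤ q p ≤ sSup L · p ≤ q · sInf L`, so all three are equal
  have hqp : q * p ≤ sSup L * p := Nat.mul_le_mul_right p hsup
  have hinf_eq : sInf L = p :=
    le_antisymm hinf (Nat.le_of_mul_le_mul_left (by nlinarith) (hp.trans_le hpq))
  have hsup_eq : sSup L = q := le_antisymm (Nat.le_of_mul_le_mul_right (by nlinarith) hp) hsup
  refine Subset.antisymm (fun k hk => ?_) hsub
  exact ⟨hinf_eq ▸ Nat.sInf_le hk, hsup_eq ▸ le_csSup hL hk⟩

lemma isIntervalSet_Icc {p q : ℕ} (h : p ≤ q) : IsIntervalSet (Icc p q) := by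
  refine ⟨nonempty_Icc.2 h, ?_⟩
  rw [csInf_Icc h, csSup_Icc h]

theorem stmt2_general {H : Type*} [CancelCommMonoid H] (hBF : IsBFMonoid H) (ρH : ℚ)
    (hub : ∀ x : H, ¬ IsUnit x → rhoSet (LSetM x) ≤ ρH)
    (a : H) (hra : rhoSet (LSetM a) = ρH)
    (hmin : sInf (LSetM a) + 1 ∈ LSetM a)
    (hmax : sSup (LSetM a) - 1 ∈ LSetM a) :
    ∃ N : ℕ, ∀ n : ℕ, N ≤ n → IsIntervalSet (LSetM (a ^ n)) := by
  have ha : ¬ IsUnit a := not_isUnit_of_mem_LSetM hmin (Nat.succ_pos _)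
  have hbdd : BddAbove (LSetM a) := (hBF a ha).2.bddAbove
  set m := sInf (LSetM a)
  set M := sSup (LSetM a)
  have hm : m ∈ LSetM a := Nat.sInf_mem ⟨_, hmin⟩
  have hm_pos : 0 < m := Nat.pos_of_ne_zero fun h => ha (isUnit_of_zero_mem_LSetM (h ▸ hm))
  have hmM : m < M := le_csSup hbdd hmin
  refine ⟨M - m, fun n hn => ?_⟩
  have hn_pos : 0 < n := by omega
  have hcov := Icc_subset_LSetM_pow hmM hn hm hmin hmax (Nat.sSup_mem ⟨_, hm⟩ hbdd)
  have hpq : n * m ≤ n * M := Nat.mul_le_mul_left n hmM.le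
  have hunit : ¬ IsUnit (a ^ n) :=
    not_isUnit_of_mem_LSetM (hcov ⟨le_rfl, hpq⟩) (Nat.mul_pos hn_pos hm_pos)
  have hρ : rhoSet (LSetM (a ^ n)) ≤ ((n * M : ℕ) : ℚ) / (n * m : ℕ) := by
    rw [Nat.cast_mul, Nat.cast_mul, mul_div_mul_left _ _ (by exact_mod_cast hn_pos.ne')]
    exact (hub _ hunit).trans_eq hra.symm
  rw [eq_Icc_of_Icc_subset_of_rhoSet_le (hBF _ hunit).2.bddAbove
    (fun h => hunit (isUnit_of_zero_mem_LSetM h)) hpq hcov hρ]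
  exact isIntervalSet_Icc hpq

theorem stmt2 {H : Type*} [CancelCommMonoid H] (hBF : IsBFMonoid H) (ρH : ℚ)
    (hub : ∀ x : H, ¬ IsUnit x → rhoSet (LSetM x) ≤ ρH)
    (hacc : ∃ x : H, ¬ IsUnit x ∧ rhoSet (LSetM x) = ρH)
    (a : H) (ha : ¬ IsUnit a) (hra : rhoSet (LSetM a) = ρH)
    (hmin : sInf (LSetM a) + 1 ∈ LSetM a)
    (hmax : sSup (LSetM a) - 1 ∈ LSetM a) :
    ∃ N : ℕ, ∀ n : ℕ, N ≤ n → IsIntervalSet (LSetM (a ^ n)) :=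
  stmt2_general hBF ρH hub a hra hmin hmax
end

section
/- Let G be a finite abelian group of odd order, and suppose there exists a minimal zero-sum sequence U over G of length D(G) that is not squarefree. Then there exist g₁, g₂ ∈ G and minimal zero-sum sequences U₁, U₂ over G of length D(G) with g₁g₂ | U₁ and (g₁ + g₂) | U₂. -/
/-!
The sequence `U` contains some `g` twice, so `U` itself witnesses `g g ∣ U₁`. Since `|G|` is odd,
doubling is an automorphism of `G`; it maps `U` to a minimal zero-sum sequence `2U` of the same
length, and `g + g = 2g` divides `2U`.
-/

theorem IsMinZS.map {G H : Type*} [AddCommGroup G] [AddCommGroup H] (e : G ≃+ H)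
    {U : Multiset G} (hU : IsMinZS U) : IsMinZS (U.map e) := by
  obtain ⟨hne, hsum, hmin⟩ := hU
  refine ⟨by simpa using hne, by rw [← map_multiset_sum, hsum, map_zero], ?_⟩
  intro V hVU hV hVsum
  have hle : V.map e.symm ≤ U := by
    simpa [Multiset.map_map] using Multiset.map_le_map (f := e.symm) hVU
  have hpre := hmin _ hle (by simpa using hV) (by rw [← map_multiset_sum, hVsum, map_zero])
  simpa [Multiset.map_map] using congrArg (Multiset.map e) hpre

theorem Multiset.exists_pair_le_of_not_nodup {α : Type*} {s : Multiset α} (hs : ¬s.Nodup) :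
    ∃ a, ({a, a} : Multiset α) ≤ s := by
  obtain ⟨a, t, rfl⟩ : ∃ a t, s = a ::ₘ a ::ₘ t := by
    simpa [Multiset.nodup_iff_ne_cons_cons] using hs
  exact ⟨a, by simp [Multiset.insert_eq_cons, Multiset.cons_le_cons_iff]⟩

noncomputable def doublingAddEquiv (G : Type*) [AddCommGroup G] (hodd : Odd (Nat.card G)) :
    G ≃+ G :=
  AddEquiv.ofBijective (nsmulAddMonoidHom 2)
    (Nat.Coprime.nsmul_right_bijective (Nat.coprime_two_right.mpr hodd))

theorem stmt10 {G : Type*} [AddCommGroup G] [Fintype G] [DecidableEq G]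
    (hodd : Odd (Fintype.card G))
    (U : Multiset G) (hU : IsMinZS U) (hcard : U.card = DavC G)
    (hnsf : U.toFinset.card ≠ U.card) :
    ∃ (g₁ g₂ : G) (U₁ U₂ : Multiset G),
      IsMinZS U₁ ∧ IsMinZS U₂ ∧ U₁.card = DavC G ∧ U₂.card = DavC G ∧
      ({g₁, g₂} : Multiset G) ≤ U₁ ∧ (g₁ + g₂) ∈ U₂ := by
  obtain ⟨g, hgg⟩ := Multiset.exists_pair_le_of_not_nodup
    (mt Multiset.toFinset_card_eq_card_iff_nodup.mpr hnsf)
  let e := doublingAddEquiv G (Nat.card_eq_fintype_card (α := G) ▸ hodd)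
  refine ⟨g, g, U, U.map e, hU, hU.map e, hcard, by rw [Multiset.card_map, hcard], hgg, ?_⟩
  have hg : g ∈ U := Multiset.mem_of_le hgg (by simp)
  have hdouble : e g = g + g := two_nsmul g
  exact hdouble ▸ Multiset.mem_map_of_mem e hg
end

section
/- Let G be a finite abelian group with |G| ≥ 3 satisfying Property P, witnessed by g₁, g₂ ∈ G and atoms U₁, U₂ of length D(G) with g₁g₂ | U₁ and (g₁+g₂) | U₂. Then for A' = (−U₁)U₁(−U₂)U₂ one has ρ(L(A')) = D(G)/2, min L(A') + 1 ∈ L(A'), and max L(A') − 1 ∈ L(A'). -/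
/-!
Write `D = D(G)`. As `0 ∤ A'`, every atom dividing `A'` has length between `2` and `D`, and
`|A'| = 4D`; hence `L(A') ⊆ [4, 2D]`, and both ends are attained: by `(-U₁)U₁(-U₂)U₂` and by the
`2D` pairs `(-g)g`. Write `U₁ = g₁g₂T` and `U₂ = (g₁+g₂)S`. Replacing a nonempty subsequence of an
atom by its sum gives an atom, so `(g₁+g₂)T` and `(-(g₁+g₂))g₁g₂` are atoms.
* `5 ∈ L(A')`: `A' = U₁ · U₂ · -((g₁+g₂)T) · (-S)(-g₁)(-g₂)`. The last factor has length `D + 1`,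
  so it is not an atom, and since `-S` is zero-sum free each of its atoms meets `(-g₁)(-g₂)`;
  it therefore factors into exactly two atoms.
* `2D - 1 ∈ L(A')`: take `±(-(g₁+g₂))g₁g₂` together with the pairs `(-g)g` for `g ∈ T` and `g ∈ S`.
-/

theorem Multiset.sum_map_tsub_le {α : Type*} [DecidableEq α] (M : Multiset α)
    (l : Multiset (Multiset α)) : (l.map (· - M)).sum ≤ l.sum - M := by
  induction l using Multiset.induction_on with
  | empty => simp
  | cons U l ih =>
    rw [Multiset.map_cons, Multiset.sum_cons, Multiset.sum_cons]
    refine (add_le_add_right ih _).trans (Multiset.le_iff_count.mpr fun a => ?_)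
    simp only [Multiset.count_add, Multiset.count_sub]
    omega

section ZeroSum

variable {G : Type*} [AddCommGroup G]

def ZeroSumFree (M : Multiset G) : Prop := ∀ V ≤ M, V ≠ 0 → V.sum ≠ 0

namespace IsMinZS

variable {U X Y : Multiset G}

theorem neg (hU : IsMinZS U) : IsMinZS (U.map fun x => -x) := by
  obtain ⟨h0, hs, hmin⟩ := hU
  refine ⟨by simpa using h0, by simp [Multiset.sum_map_neg', hs], fun V hV hV0 hVs => ?_⟩
  have hnegV : V.map (fun x => -x) = U := by
    refine hmin _ ?_ (by simpa using hV0) (by simp [Multiset.sum_map_neg', hVs])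
    simpa [Multiset.map_map, Function.comp_def] using Multiset.map_le_map (f := fun x : G => -x) hV
  rw [← hnegV, Multiset.map_map]
  simp

theorem two_le_card_iff (hU : IsMinZS U) : 2 ≤ U.card ↔ (0 : G) ∉ U := by
  constructor
  · intro hcard h0
    have hU0 := hU.2.2 {0} (Multiset.singleton_le.mpr h0) (by simp) (by simp)
    simp [← hU0] at hcard
  · intro h0
    by_contra! hcard
    obtain ⟨a, rfl⟩ : ∃ a, U = {a} :=
      Multiset.card_eq_one.mp (by have := Multiset.card_pos.mpr hU.1; omega)
    exact h0 (by simpa [eq_comm] using hU.2.1)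

theorem zeroSumFree_right (hU : IsMinZS (X + Y)) (hX : X ≠ 0) : ZeroSumFree Y := by
  intro V hV hV0 hVs
  have hcard := Multiset.card_le_card hV
  rw [hU.2.2 V (hV.trans le_add_self) hV0 hVs, Multiset.card_add] at hcard
  have := Multiset.card_pos.mpr hX
  omega

theorem sum_cons (hU : IsMinZS (X + Y)) (hX : X ≠ 0) : IsMinZS (X.sum ::ₘ Y) := by
  have hsum : X.sum + Y.sum = 0 := by rw [← Multiset.sum_add]; exact hU.2.1
  refine ⟨Multiset.cons_ne_zero, by rwa [Multiset.sum_cons], fun Z hZ hZ0 hZs => ?_⟩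
  by_cases hmem : X.sum ∈ Z
  · obtain ⟨W, rfl⟩ := Multiset.exists_cons_of_mem hmem
    have hXW : X + W = X + Y := by
      refine hU.2.2 _ (add_le_add_right ((Multiset.cons_le_cons_iff _).mp hZ) X) (by simp [hX]) ?_
      rwa [Multiset.sum_add, ← Multiset.sum_cons]
    rw [(add_right_inj X).mp hXW]
  · exact absurd hZs (hU.zeroSumFree_right hX Z ((Multiset.le_cons_of_notMem hmem).mp hZ) hZ0)

/-- `DavC G = 0` when atom lengths are unbounded, since then `sSup` takes its junk value. -/
theorem card_le_davC_s13 (hU : IsMinZS U) (hD : DavC G ≠ 0) : U.card ≤ DavC G :=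
  le_csSup (not_not.mp (mt Nat.sSup_of_not_bddAbove hD)) ⟨U, hU, rfl⟩

end IsMinZS

theorem isMinZS_pair {t : G} (ht : t ≠ 0) : IsMinZS ({-t, t} : Multiset G) := by
  refine ⟨by simp, by simp, fun V hV hV0 hVs => ?_⟩
  have hcard : V.card ≤ 2 := by simpa using Multiset.card_le_card hV
  obtain hV1 | hV2 : V.card = 1 ∨ V.card = 2 := by
    have := Multiset.card_pos.mpr hV0
    omega
  · obtain ⟨a, rfl⟩ := Multiset.card_eq_one.mp hV1
    obtain rfl : a = 0 := by simpa using hVs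
    simp [ht, eq_comm] at hV
  · exact Multiset.eq_of_le_of_card_le hV (by simp [hV2])

theorem one_mem_LSet {U : Multiset G} (hU : IsMinZS U) : 1 ∈ LSet U :=
  ⟨{U}, rfl, by simpa using hU, Multiset.sum_singleton U⟩

theorem add_mem_LSet_add {A B : Multiset G} {a b : ℕ} (ha : a ∈ LSet A) (hb : b ∈ LSet B) :
    a + b ∈ LSet (A + B) := by
  obtain ⟨l, rfl, hl, rfl⟩ := ha
  obtain ⟨m, rfl, hm, rfl⟩ := hb
  refine ⟨l + m, Multiset.card_add l m, fun U hU => ?_, Multiset.sum_add l m⟩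
  rcases Multiset.mem_add.mp hU with hU | hU
  exacts [hl U hU, hm U hU]

theorem LSet_nonempty {A : Multiset G} (hA : A.sum = 0) : (LSet A).Nonempty := by
  induction A using Multiset.strongInductionOn with
  | ih A ih =>
  by_cases hA0 : A = 0
  · exact ⟨0, 0, rfl, by simp, hA0.symm⟩
  by_cases hmin : IsMinZS A
  · exact ⟨1, one_mem_LSet hmin⟩
  obtain ⟨V, hVA, hV0, hVs, hVne⟩ : ∃ V ≤ A, V ≠ 0 ∧ V.sum = 0 ∧ V ≠ A := by
    simpa [IsMinZS, hA0, hA] using hmin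
  obtain ⟨W, rfl⟩ := Multiset.le_iff_exists_add.mp hVA
  have hW0 : W ≠ 0 := by rintro rfl; simp at hVne
  obtain ⟨a, ha⟩ := ih V (lt_add_of_pos_right V (pos_iff_ne_zero.mpr hW0)) hVs
  obtain ⟨b, hb⟩ := ih W (lt_add_of_pos_left W (pos_iff_ne_zero.mpr hV0))
    (by simpa [Multiset.sum_add, hVs] using hA)
  exact ⟨a + b, add_mem_LSet_add ha hb⟩

theorem card_mem_LSet_neg_add {S : Multiset G} (h0 : (0 : G) ∉ S) :
    S.card ∈ LSet (S.map (fun x => -x) + S) := by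
  induction S using Multiset.induction_on with
  | empty => exact ⟨0, rfl, by simp, by simp⟩
  | cons a S ih =>
    rw [Multiset.mem_cons, not_or] at h0
    have hpair := one_mem_LSet (isMinZS_pair (Ne.symm h0.1))
    have hA : (a ::ₘ S).map (fun x => -x) + a ::ₘ S = {-a, a} + (S.map (fun x => -x) + S) := by
      simp only [Multiset.map_cons, Multiset.insert_eq_cons, Multiset.cons_add, Multiset.add_cons,
        Multiset.singleton_add, Multiset.cons_swap]
    rw [hA, Multiset.card_cons, Nat.add_comm]
    exact add_mem_LSet_add hpair (ih h0.2)

theorem two_mul_le_card_of_mem_LSet {A : Multiset G} {k : ℕ} (h0 : (0 : G) ∉ A)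
    (hk : k ∈ LSet A) : 2 * k ≤ A.card := by
  obtain ⟨l, rfl, hl, rfl⟩ := hk
  have hcard : ∀ c ∈ l.map Multiset.card, 2 ≤ c := by
    simp only [Multiset.mem_map]
    rintro _ ⟨U, hU, rfl⟩
    exact (hl U hU).two_le_card_iff.mpr
      fun hU0 => h0 (Multiset.mem_of_le (Multiset.le_sum_of_mem hU) hU0)
  have hsum : l.sum.card = (l.map Multiset.card).sum := Multiset.card_join l
  simpa [hsum, mul_comm] using Multiset.card_nsmul_le_sum hcard

theorem card_le_mul_of_mem_LSet {A : Multiset G} {D k : ℕ}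
    (hD : ∀ U : Multiset G, IsMinZS U → U.card ≤ D) (hk : k ∈ LSet A) : A.card ≤ D * k := by
  obtain ⟨l, rfl, hl, rfl⟩ := hk
  have hcard : ∀ c ∈ l.map Multiset.card, c ≤ D := by
    simp only [Multiset.mem_map]
    rintro _ ⟨U, hU, rfl⟩
    exact hD U (hl U hU)
  have hsum : l.sum.card = (l.map Multiset.card).sum := Multiset.card_join l
  simpa [hsum, mul_comm] using Multiset.sum_le_card_nsmul _ _ hcard

namespace ZeroSumFree

variable {M P : Multiset G}

theorem le_card_of_mem_LSet_add (hM : ZeroSumFree M) {k : ℕ} (hk : k ∈ LSet (M + P)) :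
    k ≤ P.card := by
  classical
  obtain ⟨l, rfl, hl, hsum⟩ := hk
  have hpos : ∀ c ∈ (l.map (· - M)).map Multiset.card, 1 ≤ c := by
    simp only [Multiset.map_map, Multiset.mem_map, Function.comp_apply]
    rintro _ ⟨U, hU, rfl⟩
    rw [Nat.one_le_iff_ne_zero, Ne, Multiset.card_eq_zero, tsub_eq_zero_iff_le]
    exact fun hUM => hM U hUM (hl U hU).1 (hl U hU).2.1
  calc l.card ≤ ((l.map (· - M)).map Multiset.card).sum := by
        simpa using Multiset.card_nsmul_le_sum hpos
    _ = (l.map (· - M)).sum.card := (Multiset.card_join _).symm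
    _ ≤ (l.sum - M).card := Multiset.card_le_card (Multiset.sum_map_tsub_le M l)
    _ = P.card := by rw [hsum, add_tsub_cancel_left]

theorem two_mem_LSet_add (hM : ZeroSumFree M) (hP : P.card = 2) (hs : (M + P).sum = 0)
    (hnot : ¬ IsMinZS (M + P)) : 2 ∈ LSet (M + P) := by
  obtain ⟨k, hk⟩ := LSet_nonempty hs
  have hk2 : k ≤ 2 := hP ▸ hM.le_card_of_mem_LSet_add hk
  obtain ⟨l, rfl, hl, hsum⟩ := id hk
  interval_cases hcard : l.card
  · rw [Multiset.card_eq_zero.mp hcard, Multiset.sum_zero] at hsum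
    exact absurd (congrArg Multiset.card hsum) (by simp [hP])
  · obtain ⟨U, rfl⟩ := Multiset.card_eq_one.mp hcard
    exact absurd (by simpa [← hsum] using hl) hnot
  · exact hk

end ZeroSumFree

end ZeroSum

section Factorizations

variable {G : Type*} [AddCommGroup G] {g₁ g₂ : G} {U₁ U₂ : Multiset G}

theorem four_mem_LSet (h1 : IsMinZS U₁) (h2 : IsMinZS U₂) :
    4 ∈ LSet (U₁.map (fun x => -x) + U₁ + U₂.map (fun x => -x) + U₂) :=
  add_mem_LSet_add (add_mem_LSet_add (add_mem_LSet_add (one_mem_LSet h1.neg) (one_mem_LSet h1))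
    (one_mem_LSet h2.neg)) (one_mem_LSet h2)

theorem card_add_card_mem_LSet (h01 : (0 : G) ∉ U₁) (h02 : (0 : G) ∉ U₂) :
    U₁.card + U₂.card ∈ LSet (U₁.map (fun x => -x) + U₁ + U₂.map (fun x => -x) + U₂) := by
  rw [add_assoc]
  exact add_mem_LSet_add (card_mem_LSet_neg_add h01) (card_mem_LSet_neg_add h02)

theorem five_mem_LSet (h1 : IsMinZS U₁) (h2 : IsMinZS U₂)
    (hmax : ∀ U : Multiset G, IsMinZS U → U.card ≤ U₂.card)
    (hd1 : ({g₁, g₂} : Multiset G) ≤ U₁) (hd2 : g₁ + g₂ ∈ U₂) :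
    5 ∈ LSet (U₁.map (fun x => -x) + U₁ + U₂.map (fun x => -x) + U₂) := by
  obtain ⟨T, rfl⟩ := Multiset.le_iff_exists_add.mp hd1
  obtain ⟨S, rfl⟩ := Multiset.exists_cons_of_mem hd2
  have hX : IsMinZS ((g₁ + g₂) ::ₘ T) := by simpa using h1.sum_cons (by simp)
  have hfree : ZeroSumFree (S.map fun x => -x) := by
    have h2neg := h2.neg
    rw [Multiset.map_cons, ← Multiset.singleton_add] at h2neg
    exact h2neg.zeroSumFree_right (by simp)
  have hsum : (S.map (fun x => -x) + {-g₁, -g₂}).sum = 0 := by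
    calc _ = -((g₁ + g₂) ::ₘ S).sum := by simp [Multiset.sum_map_neg']; abel
      _ = 0 := by rw [h2.2.1, neg_zero]
  have hlong : ¬ IsMinZS (S.map (fun x => -x) + {-g₁, -g₂}) := fun h => by
    simpa using hmax _ h
  have hsplit := hfree.two_mem_LSet_add (by simp) hsum hlong
  convert add_mem_LSet_add (add_mem_LSet_add (add_mem_LSet_add (one_mem_LSet h1)
    (one_mem_LSet h2)) (one_mem_LSet hX.neg)) hsplit using 2
  simp only [Multiset.map_add, Multiset.insert_eq_cons, ← Multiset.singleton_add,
    Multiset.map_singleton]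
  abel

theorem card_add_card_sub_one_mem_LSet (h1 : IsMinZS U₁) (h01 : (0 : G) ∉ U₁)
    (h02 : (0 : G) ∉ U₂) (hd1 : ({g₁, g₂} : Multiset G) ≤ U₁) (hd2 : g₁ + g₂ ∈ U₂) :
    U₁.card + U₂.card - 1 ∈ LSet (U₁.map (fun x => -x) + U₁ + U₂.map (fun x => -x) + U₂) := by
  obtain ⟨T, rfl⟩ := Multiset.le_iff_exists_add.mp hd1
  obtain ⟨S, rfl⟩ := Multiset.exists_cons_of_mem hd2
  have hTsum : T.sum = -(g₁ + g₂) := by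
    rw [eq_neg_iff_add_eq_zero, add_comm]
    simpa [add_assoc] using h1.2.1
  have hT : T ≠ 0 := by
    rintro rfl
    exact h02 (by simp [neg_eq_zero.mp hTsum.symm])
  have hW : IsMinZS (-(g₁ + g₂) ::ₘ {g₁, g₂}) := by
    rw [← hTsum]
    exact (add_comm ({g₁, g₂} : Multiset G) T ▸ h1).sum_cons hT
  have hT0 : (0 : G) ∉ T := fun h => h01 (Multiset.mem_add.mpr (Or.inr h))
  have hS0 : (0 : G) ∉ S := fun h => h02 (Multiset.mem_cons_of_mem h)
  convert add_mem_LSet_add (add_mem_LSet_add (add_mem_LSet_add (one_mem_LSet hW.neg)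
    (one_mem_LSet hW)) (card_mem_LSet_neg_add hT0)) (card_mem_LSet_neg_add hS0) using 2
  · simp only [Multiset.map_add, Multiset.insert_eq_cons, ← Multiset.singleton_add,
      Multiset.map_singleton, neg_neg]
    abel
  · simp only [Multiset.insert_eq_cons, Multiset.cons_add, Multiset.singleton_add,
      Multiset.card_cons]
    omega

end Factorizations

theorem stmt13_general {G : Type*} [AddCommGroup G]
    (g₁ g₂ : G) (U₁ U₂ : Multiset G)
    (h1 : IsMinZS U₁) (h2 : IsMinZS U₂)
    (hc1 : U₁.card = DavC G) (hc2 : U₂.card = DavC G)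
    (hd1 : ({g₁, g₂} : Multiset G) ≤ U₁) (hd2 : (g₁ + g₂) ∈ U₂) :
    ∀ A' : Multiset G,
      A' = U₁.map (fun x => -x) + U₁ + U₂.map (fun x => -x) + U₂ →
      rhoSet (LSet A') = (DavC G : ℚ) / 2 ∧
      sInf (LSet A') + 1 ∈ LSet A' ∧
      sSup (LSet A') - 1 ∈ LSet A' := by
  rintro A' rfl
  have hD : 2 ≤ DavC G := hc1 ▸ by simpa using Multiset.card_le_card hd1
  have hmax : ∀ U : Multiset G, IsMinZS U → U.card ≤ DavC G :=
    fun U hU => hU.card_le_davC_s13 (by omega)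
  have h01 : (0 : G) ∉ U₁ := h1.two_le_card_iff.mp (by omega)
  have h02 : (0 : G) ∉ U₂ := h2.two_le_card_iff.mp (by omega)
  have hA0 : (0 : G) ∉ U₁.map (fun x => -x) + U₁ + U₂.map (fun x => -x) + U₂ := by
    simp [Multiset.mem_add, h01, h02]
  have hcardA : (U₁.map (fun x => -x) + U₁ + U₂.map (fun x => -x) + U₂).card = 4 * DavC G := by
    simp only [Multiset.card_add, Multiset.card_map, hc1, hc2]
    ring
  have hInf : sInf (LSet _) = 4 := IsLeast.csInf_eq ⟨four_mem_LSet h1 h2, fun k hk => by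
    have := card_le_mul_of_mem_LSet hmax hk
    nlinarith⟩
  have hSup : sSup (LSet _) = 2 * DavC G := IsGreatest.csSup_eq
    ⟨by simpa [hc1, hc2, two_mul] using card_add_card_mem_LSet h01 h02, fun k hk => by
      have := two_mul_le_card_of_mem_LSet hA0 hk
      omega⟩
  refine ⟨?_, hInf ▸ five_mem_LSet h1 h2 (hc2 ▸ hmax) hd1 hd2, ?_⟩
  · rw [rhoSet, hSup, hInf]
    push_cast
    ring
  · simpa [hSup, hc1, hc2, two_mul] using card_add_card_sub_one_mem_LSet h1 h01 h02 hd1 hd2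

theorem stmt13 {G : Type*} [AddCommGroup G] [Fintype G] (hcard : 3 ≤ Fintype.card G)
    (g₁ g₂ : G) (U₁ U₂ : Multiset G)
    (h1 : IsMinZS U₁) (h2 : IsMinZS U₂)
    (hc1 : U₁.card = DavC G) (hc2 : U₂.card = DavC G)
    (hd1 : ({g₁, g₂} : Multiset G) ≤ U₁) (hd2 : (g₁ + g₂) ∈ U₂) :
    ∀ A' : Multiset G,
      A' = U₁.map (fun x => -x) + U₁ + U₂.map (fun x => -x) + U₂ →
      rhoSet (LSet A') = (DavC G : ℚ) / 2 ∧
      sInf (LSet A') + 1 ∈ LSet A' ∧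
      sSup (LSet A') - 1 ∈ LSet A' :=
  stmt13_general g₁ g₂ U₁ U₂ h1 h2 hc1 hc2 hd1 hd2
end

section
/- Let G = C₂⁴ ⊕ C_{2k} with k ≥ 70 odd, and assume the classification: every minimal zero-sum sequence of length D(G) = 2k+5 has the form U = e^{2k−3}V₁V₂ for some basis (e₁,e₂,e₃,e₄,e) with ord(eᵢ)=2 and ord(e)=2k, where V₁ = (e₁+e₂+e₃+((k−1)/2)e)∏ᵢ₌₁³(eᵢ+((k+1)/2)e) and V₂ = (e₁+e₂+e₃+e₄+((k+1)/2)e)∏ᵢ₌₁³(eᵢ+e₄+((k+1)/2)e). Then G satisfies Property P: there exist g₁, g₂ ∈ G and minimal zero-sum sequences U₁, U₂ of length D(G) with g₁g₂ | U₁ and (g₁+g₂) | U₂. -/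
def PropertyP (G : Type*) [AddCommGroup G] : Prop :=
  ∃ (g₁ g₂ : G) (U₁ U₂ : Multiset G),
    IsMinZS U₁ ∧ IsMinZS U₂ ∧ U₁.card = DavC G ∧ U₂.card = DavC G ∧
    ({g₁, g₂} : Multiset G) ≤ U₁ ∧ (g₁ + g₂) ∈ U₂

/-- The maximal-length minimal zero-sum sequence `e^{2k-3} V₁ V₂` of the
classification (Lemma on `C₂⁴ ⊕ C_{2k}`, `k` odd), transported along an
isomorphism `ψ` identifying the abstract group `G` with `C₂⁴ ⊕ C_{2k}`;
the basis `(e₁,e₂,e₃,e₄,e)` is the image of the canonical basis under `ψ`. -/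
noncomputable def maxSeq (k : ℕ) {G : Type*} [AddCommGroup G]
    (ψ : ((Fin 4 → ZMod 2) × ZMod (2 * k)) ≃+ G) : Multiset G :=
  let e : G := ψ (0, 1)
  let E : Fin 4 → G := fun i => ψ (fun j => if j = i then 1 else 0, 0)
  Multiset.replicate (2 * k - 3) e +
    ((E 0 + E 1 + E 2 + ((k - 1) / 2 : ℕ) • e) ::ₘ
     (E 0 + ((k + 1) / 2 : ℕ) • e) ::ₘ
     (E 1 + ((k + 1) / 2 : ℕ) • e) ::ₘ
     (E 2 + ((k + 1) / 2 : ℕ) • e) ::ₘ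
     (E 0 + E 1 + E 2 + E 3 + ((k + 1) / 2 : ℕ) • e) ::ₘ
     (E 0 + E 3 + ((k + 1) / 2 : ℕ) • e) ::ₘ
     (E 1 + E 3 + ((k + 1) / 2 : ℕ) • e) ::ₘ
     {E 2 + E 3 + ((k + 1) / 2 : ℕ) • e})

/-- The image of a minimal zero-sum sequence under a group isomorphism is again
a minimal zero-sum sequence. -/
lemma isMinZS_map {G H : Type*} [AddCommGroup G] [AddCommGroup H]
    (σ : G ≃+ H) {U : Multiset G} (hU : IsMinZS U) :
    IsMinZS (U.map σ) := by
  obtain ⟨h0, hs, hmin⟩ := hU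
  refine ⟨by simpa using h0, ?_, ?_⟩
  · rw [← map_multiset_sum, hs, map_zero]
  · intro V hV hV0 hVsum
    obtain ⟨C, hC⟩ := Multiset.le_iff_exists_add.mp hV
    have hU' : U = V.map σ.symm + C.map σ.symm := by
      have := congrArg (Multiset.map σ.symm) hC
      simpa [Multiset.map_map] using this
    have hle : V.map σ.symm ≤ U := hU' ▸ Multiset.le_add_right _ _
    have hne : V.map σ.symm ≠ 0 := by simpa using hV0
    have hsum : (V.map σ.symm).sum = 0 := by
      rw [← map_multiset_sum, hVsum, map_zero]
    have := hmin _ hle hne hsum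
    have := congrArg (Multiset.map σ) this
    simpa [Multiset.map_map] using this

/-- The automorphism of `C₂⁴ ⊕ C_{2k}` that maps the basis
`(e₁, e₂, e₃, e₄, e)` to the basis `(e₁+e₂+e₃, e₂, e₃, e₄, e)`. -/
def tau (k : ℕ) : ((Fin 4 → ZMod 2) × ZMod (2 * k)) ≃+ ((Fin 4 → ZMod 2) × ZMod (2 * k)) where
  toFun p := (fun j => p.1 j + (if j = 1 ∨ j = 2 then p.1 0 else 0), p.2)
  invFun p := (fun j => p.1 j + (if j = 1 ∨ j = 2 then p.1 0 else 0), p.2)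
  left_inv p := by
    have h2 : ∀ a b : ZMod 2, a + b + b = a := by decide
    refine Prod.ext ?_ rfl
    funext j
    have h0 : ¬((0:Fin 4) = 1 ∨ (0:Fin 4) = 2) := by decide
    by_cases h : j = 1 ∨ j = 2 <;> simp [h, h0, h2]
  right_inv p := by
    have h2 : ∀ a b : ZMod 2, a + b + b = a := by decide
    refine Prod.ext ?_ rfl
    funext j
    have h0 : ¬((0:Fin 4) = 1 ∨ (0:Fin 4) = 2) := by decide
    by_cases h : j = 1 ∨ j = 2 <;> simp [h, h0, h2]
  map_add' p q := by
    refine Prod.ext ?_ rfl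
    funext j
    simp only [Prod.fst_add, Pi.add_apply]
    split_ifs <;> ring

lemma maxSeq_def (k : ℕ) {G : Type*} [AddCommGroup G]
    (ψ : ((Fin 4 → ZMod 2) × ZMod (2 * k)) ≃+ G) :
    maxSeq k ψ =
      Multiset.replicate (2 * k - 3) (ψ (0, 1)) +
      ((ψ (fun j => if j = 0 then 1 else 0, 0) + ψ (fun j => if j = 1 then 1 else 0, 0)
          + ψ (fun j => if j = 2 then 1 else 0, 0) + ((k - 1) / 2 : ℕ) • ψ (0, 1)) ::ₘ
       (ψ (fun j => if j = 0 then 1 else 0, 0) + ((k + 1) / 2 : ℕ) • ψ (0, 1)) ::ₘ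
       (ψ (fun j => if j = 1 then 1 else 0, 0) + ((k + 1) / 2 : ℕ) • ψ (0, 1)) ::ₘ
       (ψ (fun j => if j = 2 then 1 else 0, 0) + ((k + 1) / 2 : ℕ) • ψ (0, 1)) ::ₘ
       (ψ (fun j => if j = 0 then 1 else 0, 0) + ψ (fun j => if j = 1 then 1 else 0, 0)
          + ψ (fun j => if j = 2 then 1 else 0, 0) + ψ (fun j => if j = 3 then 1 else 0, 0)
          + ((k + 1) / 2 : ℕ) • ψ (0, 1)) ::ₘ
       (ψ (fun j => if j = 0 then 1 else 0, 0) + ψ (fun j => if j = 3 then 1 else 0, 0)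
          + ((k + 1) / 2 : ℕ) • ψ (0, 1)) ::ₘ
       (ψ (fun j => if j = 1 then 1 else 0, 0) + ψ (fun j => if j = 3 then 1 else 0, 0)
          + ((k + 1) / 2 : ℕ) • ψ (0, 1)) ::ₘ
       {ψ (fun j => if j = 2 then 1 else 0, 0) + ψ (fun j => if j = 3 then 1 else 0, 0)
          + ((k + 1) / 2 : ℕ) • ψ (0, 1)}) := rfl

theorem stmt19 {G : Type*} [AddCommGroup G] [Fintype G] (k : ℕ)
    (hk : 70 ≤ k) (hkodd : Odd k)
    (ψ₀ : ((Fin 4 → ZMod 2) × ZMod (2 * k)) ≃+ G)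
    (hD : DavC G = 2 * k + 5)
    (hclass : ∀ U : Multiset G, IsMinZS U → U.card = 2 * k + 5 →
      ∃ ψ : ((Fin 4 → ZMod 2) × ZMod (2 * k)) ≃+ G, U = maxSeq k ψ) :
    PropertyP G := by
  classical
  -- Step 1: produce a minimal zero-sum sequence of maximal length 2k+5.
  have hD' : sSup {n | ∃ U : Multiset G, IsMinZS U ∧ U.card = n} = 2 * k + 5 := hD
  have hSne : {n | ∃ U : Multiset G, IsMinZS U ∧ U.card = n}.Nonempty := by
    by_contra h
    rw [Set.not_nonempty_iff_eq_empty] at h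
    rw [h, csSup_empty] at hD'
    simp at hD'
  have hbdd : BddAbove {n | ∃ U : Multiset G, IsMinZS U ∧ U.card = n} := by
    by_contra h
    rw [csSup_of_not_bddAbove h, csSup_empty] at hD'
    simp at hD'
  have hmem : (2 * k + 5) ∈ {n | ∃ U : Multiset G, IsMinZS U ∧ U.card = n} :=
    hD' ▸ Nat.sSup_mem hSne hbdd
  obtain ⟨U, hU, hUcard⟩ := hmem
  obtain ⟨ψ, hUeq⟩ := hclass U hU hUcard
  -- Notation
  set e : G := ψ (0, 1) with he
  set E0 : G := ψ (fun j => if j = 0 then 1 else 0, 0) with hE0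
  set E1 : G := ψ (fun j => if j = 1 then 1 else 0, 0) with hE1
  set E2 : G := ψ (fun j => if j = 2 then 1 else 0, 0) with hE2
  obtain ⟨m, hm⟩ := hkodd
  have hm1 : (k - 1) / 2 = m := by omega
  have hm2 : (k + 1) / 2 = m + 1 := by omega
  -- The automorphism σ of G induced by tau.
  set σ : G ≃+ G := (ψ.symm.trans (tau k)).trans ψ with hσ
  have hσe : σ e = e := by
    rw [hσ, he]
    simp only [AddEquiv.trans_apply, AddEquiv.symm_apply_apply]
    congr 1
    refine Prod.ext ?_ rfl
    funext j
    simp [tau]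
  have hσE0 : σ E0 = E0 + E1 + E2 := by
    rw [hσ, hE0, hE1, hE2]
    simp only [AddEquiv.trans_apply, AddEquiv.symm_apply_apply]
    rw [← map_add, ← map_add]
    congr 1
    refine Prod.ext ?_ (by simp [tau])
    funext j
    simp only [tau, AddEquiv.coe_mk, Equiv.coe_fn_mk, Prod.fst_add, Pi.add_apply]
    fin_cases j <;> simp
  refine ⟨e, E0 + E1 + E2 + ((k - 1) / 2 : ℕ) • e, U, U.map σ,
    hU, isMinZS_map σ hU, by rw [hUcard, hD], by rw [Multiset.card_map, hUcard, hD], ?_, ?_⟩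
  · -- {g₁, g₂} ≤ U
    have h12 : ({e, E0 + E1 + E2 + ((k - 1) / 2 : ℕ) • e} : Multiset G)
        = {e} + {E0 + E1 + E2 + ((k - 1) / 2 : ℕ) • e} := rfl
    rw [h12, hUeq, maxSeq_def]
    refine add_le_add ?_ ?_
    · rw [Multiset.singleton_le, Multiset.mem_replicate]
      exact ⟨by omega, rfl⟩
    · rw [Multiset.singleton_le]
      exact Multiset.mem_cons_self _ _
  · -- g₁ + g₂ ∈ U.map σ
    rw [hUeq, maxSeq_def, Multiset.map_add, Multiset.map_replicate, Multiset.map_cons,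
      Multiset.map_cons, Multiset.map_cons, Multiset.map_cons, Multiset.map_cons,
      Multiset.map_cons, Multiset.map_cons, Multiset.map_singleton]
    rw [Multiset.mem_add]
    right
    refine Multiset.mem_cons.mpr (Or.inr (Multiset.mem_cons.mpr (Or.inl ?_)))
    rw [map_add, map_nsmul, hσE0, hσe, hm1, hm2, succ_nsmul]
    abel
end
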